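/- Let O be a complete discrete valuation ring, G a finite group, and M an OG-lattice that is projective relative to a subgroup H ≤ G (i.e., the identity of M is in the image of the relative trace map Tr_{H,G} : End_{OH}(M) → End_{OG}(M)). If π^n · Id_M factors through a projective OH-module as an OH-map, then π^n · Id_M factors through a projective OG-module as an OG-map. Consequently exp(M) = exp(M↓_H). -/

import Mathlib

/-!
Given `π ^ n • id_M = v ∘ u` through a projective `O[H]`-module `P`, the relative trace
gives `π ^ n • id_M = Tr_{H,G}(π ^ n • a) = Tr_{H,G}(v ∘ u ∘ a)`, and the relative trace of
any map factoring through `P` factors through the induced module, a direct summand of the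
free `O[G]`-module `P →₀ O[G]`. Conversely `O[G]` is a free `O[H]`-module, with basis a right
transversal of `H`, so projective `O[G]`-modules stay projective on restriction to `H`.
-/

open MonoidAlgebra Subgroup

section Transversal

variable {G : Type*} [Group G] {H : Subgroup G}

theorem Subgroup.isComplement_of_existsUnique_mem_inv_mul_mem {T : Set G}
    (hT : ∀ g : G, ∃! t, t ∈ T ∧ g⁻¹ * t ∈ H) : IsComplement T H := by
  refine isComplement_iff_existsUnique_inv_mul_mem.mpr fun g => ?_
  obtain ⟨t, ⟨htT, htH⟩, huniq⟩ := hT g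
  refine ⟨⟨t, htT⟩, by simpa using H.inv_mem htH, fun s hs => Subtype.ext ?_⟩
  exact huniq s ⟨s.2, by simpa using H.inv_mem hs⟩

theorem Subgroup.IsComplement.toLeftFun_eq {S : Set G} (hS : IsComplement S H) {g t : G}
    (ht : t ∈ S) (hgt : g⁻¹ * t ∈ H) : (hS.toLeftFun g : G) = t :=
  congrArg Subtype.val <| (isComplement_iff_existsUnique_inv_mul_mem.mp hS g).unique
    (y₂ := ⟨t, ht⟩) (hS.inv_toLeftFun_mul_mem g) (by simpa using H.inv_mem hgt)

theorem Subgroup.IsComplement.sum_mul_left {β : Type*} [AddCommMonoid β] {T : Finset G}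
    (hT : IsComplement (T : Set G) H) {F : G → β} (hF : ∀ x, ∀ h ∈ H, F (x * h) = F x)
    (g : G) : ∑ t ∈ T, F (g * t) = ∑ t ∈ T, F t := by
  have hmem : ∀ x, (hT.toLeftFun x : G) ∈ T := fun x => (hT.toLeftFun x).2
  refine Finset.sum_nbij' (fun t => hT.toLeftFun (g * t)) (fun t => hT.toLeftFun (g⁻¹ * t))
    (fun t _ => hmem _) (fun t _ => hmem _) (fun t ht => ?_) (fun t ht => ?_) (fun t _ => ?_)
  · refine hT.toLeftFun_eq ht ?_
    simpa [mul_assoc] using hT.inv_toLeftFun_mul_mem (g * t)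
  · refine hT.toLeftFun_eq ht ?_
    simpa [mul_assoc] using hT.inv_toLeftFun_mul_mem (g⁻¹ * t)
  · have hcoset := hF (g * t) _ (hT.inv_mul_toLeftFun_mem (g * t))
    rwa [mul_inv_cancel_left, eq_comm] at hcoset

end Transversal

section RelativeTrace

variable {O G : Type*} [CommSemiring O] [Group G] {H : Subgroup G}
  {M N : Type*} [AddCommMonoid M] [Module O M] [Module (MonoidAlgebra O G) M]
  [AddCommMonoid N] [Module O N] [Module (MonoidAlgebra O G) N]

theorem of_smul_apply_inv_smul_mul_of_mem {f : M →ₗ[O] N}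
    (hf : ∀ h ∈ H, ∀ m, f (of O G h • m) = of O G h • f m) (m : M) (x : G) {h : G}
    (hh : h ∈ H) :
    of O G (x * h) • f (of O G (x * h)⁻¹ • m) = of O G x • f (of O G x⁻¹ • m) := by
  rw [mul_inv_rev, map_mul, map_mul, mul_smul, ← hf h hh, mul_smul, ← mul_smul (of O G h),
    ← map_mul, mul_inv_cancel, map_one, one_smul]

variable [IsScalarTower O (MonoidAlgebra O G) M] [IsScalarTower O (MonoidAlgebra O G) N]

noncomputable def relTrace (T : Finset G) (f : M →ₗ[O] N) : M →ₗ[O] N :=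
  ∑ t ∈ T, Algebra.lsmul O O N (of O G t) ∘ₗ f ∘ₗ Algebra.lsmul O O M (of O G t⁻¹)

theorem relTrace_apply (T : Finset G) (f : M →ₗ[O] N) (m : M) :
    relTrace T f m = ∑ t ∈ T, of O G t • f (of O G t⁻¹ • m) := by
  simp only [relTrace, LinearMap.sum_apply, LinearMap.comp_apply, Algebra.lsmul_apply]

theorem relTrace_smul (T : Finset G) (c : O) (f : M →ₗ[O] N) :
    relTrace T (c • f) = c • relTrace T f := by
  ext m
  simp only [relTrace_apply, LinearMap.smul_apply, Finset.smul_sum, smul_comm c]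

theorem map_relTrace {N' : Type*} [AddCommMonoid N'] [Module O N']
    [Module (MonoidAlgebra O G) N'] [IsScalarTower O (MonoidAlgebra O G) N']
    (T : Finset G) (f : M →ₗ[O] N) (V : N →ₗ[MonoidAlgebra O G] N') (m : M) :
    V (relTrace T f m) = relTrace T (V.restrictScalars O ∘ₗ f) m := by
  simp only [relTrace_apply, map_sum, map_smul, LinearMap.comp_apply,
    LinearMap.restrictScalars_apply]

theorem relTrace_of_smul {T : Finset G} (hT : IsComplement (T : Set G) H) {f : M →ₗ[O] N}
    (hf : ∀ h ∈ H, ∀ m, f (of O G h • m) = of O G h • f m) (g : G) (m : M) :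
    relTrace T f (of O G g • m) = of O G g • relTrace T f m := by
  have htranslate :=
    hT.sum_mul_left (F := fun x => of O G x • f (of O G x⁻¹ • of O G g • m))
      (fun x _ hh => of_smul_apply_inv_smul_mul_of_mem hf _ x hh) g
  rw [relTrace_apply, relTrace_apply, Finset.smul_sum, ← htranslate]
  refine Finset.sum_congr rfl fun t _ => ?_
  rw [mul_inv_rev, map_mul, map_mul, mul_smul, mul_smul, ← mul_smul (of O G g⁻¹), ← map_mul,
    inv_mul_cancel, map_one, one_smul]

noncomputable def relTraceHom {T : Finset G} (hT : IsComplement (T : Set G) H)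
    {f : M →ₗ[O] N} (hf : ∀ h ∈ H, ∀ m, f (of O G h • m) = of O G h • f m) :
    M →ₗ[MonoidAlgebra O G] N :=
  equivariantOfLinearOfComm (relTrace T f) (relTrace_of_smul hT hf)

theorem relTraceHom_apply {T : Finset G} (hT : IsComplement (T : Set G) H) {f : M →ₗ[O] N}
    (hf : ∀ h ∈ H, ∀ m, f (of O G h • m) = of O G h • f m) (m : M) :
    relTraceHom hT hf m = relTrace T f m := rfl

end RelativeTrace

section SemilinearExtension

variable {k G G' : Type*} [CommSemiring k] [Monoid G] [Monoid G'] (ψ : G →* G')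

theorem MonoidAlgebra.mapDomainAlgHom_of (g : G) :
    mapDomainAlgHom k k ψ (of k G g) = of k G' (ψ g) := by
  simp

variable {A B : Type*} [AddCommMonoid A] [Module k A] [Module (MonoidAlgebra k G) A]
  [IsScalarTower k (MonoidAlgebra k G) A] [AddCommMonoid B] [Module k B]
  [Module (MonoidAlgebra k G') B] [IsScalarTower k (MonoidAlgebra k G') B]

theorem MonoidAlgebra.map_smul_of_map_of_smul (f : A →ₗ[k] B)
    (hf : ∀ g x, f (of k G g • x) = of k G' (ψ g) • f x) (r : MonoidAlgebra k G) (x : A) :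
    f (r • x) = mapDomainAlgHom k k ψ r • f x := by
  induction r using MonoidAlgebra.induction_linear with
  | zero => simp
  | add p q hp hq => rw [add_smul, map_add, hp, hq, map_add, add_smul]
  | single g c =>
    rw [← smul_of, smul_assoc, map_smul, hf, map_smul, smul_assoc, mapDomainAlgHom_of]

theorem MonoidAlgebra.linearCombination_mapRange_mapDomainAlgHom (f : A →ₗ[k] B)
    (hf : ∀ g x, f (of k G g • x) = of k G' (ψ g) • f x) (y : A →₀ MonoidAlgebra k G) :
    Finsupp.linearCombination _ f (Finsupp.mapRange (mapDomainAlgHom k k ψ) (map_zero _) y) =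
      f (Finsupp.linearCombination _ id y) := by
  induction y using Finsupp.induction_linear with
  | zero => simp
  | add y z hy hz => rw [Finsupp.mapRange_add (map_add _), map_add, hy, hz, map_add, map_add]
  | single x r =>
    rw [Finsupp.mapRange_single, Finsupp.linearCombination_single,
      Finsupp.linearCombination_single, id_eq, map_smul_of_map_of_smul ψ f hf]

end SemilinearExtension

section Restriction

variable {O G : Type*} [CommSemiring O] [Group G] {H : Subgroup G}

noncomputable instance : Module (MonoidAlgebra O H) (MonoidAlgebra O G) :=
  Module.compHom _ (mapDomainAlgHom O O H.subtype).toRingHom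

theorem MonoidAlgebra.subgroup_smul_def (r : MonoidAlgebra O H) (x : MonoidAlgebra O G) :
    r • x = mapDomainAlgHom O O H.subtype r * x := rfl

instance : IsScalarTower O (MonoidAlgebra O H) (MonoidAlgebra O G) where
  smul_assoc c r x := by simp only [subgroup_smul_def, map_smul, smul_mul_assoc]

theorem Finsupp.subgroup_smul_eq {ι : Type*} (r : MonoidAlgebra O H)
    (x : ι →₀ MonoidAlgebra O G) : r • x = mapDomainAlgHom O O H.subtype r • x := rfl

theorem Subgroup.IsComplement.bijective_linearCombination_of {R : Set G}
    (hR : IsComplement (H : Set G) R) :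
    Function.Bijective (Finsupp.linearCombination (MonoidAlgebra O H) fun t : R => of O G t) := by
  -- over `O`, the map relabels basis elements along `R × H ≃ G`, `(t, h) ↦ h * t`
  let e : (R →₀ MonoidAlgebra O H) ≃ₗ[O] MonoidAlgebra O G :=
    Finsupp.mapRange.linearEquiv (coeffLinearEquiv O) ≪≫ₗ
      (Finsupp.curryLinearEquiv O).symm ≪≫ₗ
      Finsupp.domLCongr ((Equiv.prodComm R H).trans hR.equiv.symm) ≪≫ₗ
      (coeffLinearEquiv O).symm
  have he : (Finsupp.linearCombination _ fun t : R => of O G t).restrictScalars O =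
      e.toLinearMap := by
    ext t h : 3
    have hσ : hR.equiv.symm (h, t) = (h : G) * t := rfl
    simp [e, subgroup_smul_def, hσ]
  rw [← LinearMap.coe_restrictScalars O, he]
  exact e.bijective

noncomputable instance : Module.Free (MonoidAlgebra O H) (MonoidAlgebra O G) :=
  .of_basis <| .ofRepr <| (LinearEquiv.ofBijective _
    (default : H.RightTransversal).2.bijective_linearCombination_of).symm

end Restriction

def FactorsThroughProjective (A : Type*) [Semiring A] {M N : Type*} [AddCommGroup M]
    [Module A M] [AddCommGroup N] [Module A N] (f : M → N) : Prop :=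
  ∃ (Q : Type) (_ : AddCommGroup Q) (_ : Module A Q), Module.Projective A Q ∧
    ∃ (u : M →ₗ[A] Q) (v : Q →ₗ[A] N), ∀ m, v (u m) = f m

section ProjectiveFactorization

variable {O G : Type} [CommRing O] [Group G] {H : Subgroup G}
  {M N : Type*} [AddCommGroup M] [Module O M] [Module (MonoidAlgebra O G) M]
  [IsScalarTower O (MonoidAlgebra O G) M] [AddCommGroup N] [Module O N]
  [Module (MonoidAlgebra O G) N] [IsScalarTower O (MonoidAlgebra O G) N]

variable (O H) in
/-- `M` and `N` are regarded as `O[H]`-modules by restriction along `O[H] → O[G]`. -/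
def FactorsThroughProjectiveRes (f : M → N) : Prop :=
  ∃ (P : Type) (_ : AddCommGroup P) (_ : Module (MonoidAlgebra O H) P) (_ : Module O P)
    (_ : IsScalarTower O (MonoidAlgebra O H) P), Module.Projective (MonoidAlgebra O H) P ∧
    ∃ (u : M →ₗ[O] P) (v : P →ₗ[O] N),
      (∀ (h : H) m, u (of O G h • m) = of O H h • u m) ∧
      (∀ (h : H) x, v (of O H h • x) = of O G h • v x) ∧ ∀ m, v (u m) = f m

theorem FactorsThroughProjective.factorsThroughProjectiveRes {f : M → N}
    (hf : FactorsThroughProjective (MonoidAlgebra O G) f) : FactorsThroughProjectiveRes O H f := by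
  obtain ⟨Q, _, _, hQ, u, v, huv⟩ := hf
  obtain ⟨s, hs⟩ := Module.projective_def.mp hQ
  refine ⟨Q →₀ MonoidAlgebra O G, inferInstance, inferInstance, inferInstance, inferInstance,
    inferInstance, (s ∘ₗ u).restrictScalars O,
    (v ∘ₗ Finsupp.linearCombination _ id).restrictScalars O, fun h m => ?_, fun h x => ?_,
    fun m => ?_⟩
  · simp [Finsupp.subgroup_smul_eq]
  · simp [Finsupp.subgroup_smul_eq]
  · simp [hs (u m), huv]

theorem factorsThroughProjective_relTrace {T : Finset G} (hT : IsComplement (T : Set G) H)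
    {f : M →ₗ[O] N} (hf : FactorsThroughProjectiveRes O H f) :
    FactorsThroughProjective (MonoidAlgebra O G) (relTrace T f) := by
  obtain ⟨P, _, _, _, _, hP, u, v, hu, hv, huv⟩ := hf
  obtain ⟨s, hs⟩ := Module.projective_def.mp hP
  let ι : P →ₗ[MonoidAlgebra O H] (P →₀ MonoidAlgebra O G) :=
    Finsupp.mapRange.linearMap
      { toFun := mapDomainAlgHom O O H.subtype
        map_add' := map_add _
        map_smul' := map_mul _ } ∘ₗ s
  let V : (P →₀ MonoidAlgebra O G) →ₗ[MonoidAlgebra O G] N := Finsupp.linearCombination _ v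
  have hVι : ∀ x, V (ι x) = v x := fun x =>
    (linearCombination_mapRange_mapDomainAlgHom H.subtype v hv (s x)).trans (congrArg v (hs x))
  let w := ι.restrictScalars O ∘ₗ u
  have hw : ∀ h ∈ H, ∀ m, w (of O G h • m) = of O G h • w m := by
    intro h hh m
    change ι (u (of O G h • m)) = of O G h • ι (u m)
    rw [hu ⟨h, hh⟩, map_smul, Finsupp.subgroup_smul_eq, mapDomainAlgHom_of]
    rfl
  refine ⟨P →₀ MonoidAlgebra O G, inferInstance, inferInstance, inferInstance,
    relTraceHom hT hw, V, fun m => ?_⟩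
  rw [relTraceHom_apply, map_relTrace]
  congr 2
  ext x
  simp [w, hVι, huv]

end ProjectiveFactorization

theorem relative_projectivity_exponent_general
    (O : Type) [CommRing O]
    (π : O)
    (G : Type) [Group G] (H : Subgroup G)
    (M : Type) [AddCommGroup M] [Module (MonoidAlgebra O G) M]
    [Module O M] [IsScalarTower O (MonoidAlgebra O G) M]
    -- a transversal of the left cosets of `H` in `G`
    (T : Finset G) (hT : ∀ g : G, ∃! t : G, t ∈ T ∧ g⁻¹ * t ∈ H)
    -- an `OH`-linear endomorphism `a` of `M` ...
    (a : M → M)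
    (haAdd : ∀ m m' : M, a (m + m') = a m + a m')
    (haO : ∀ (c : O) (m : M), a (c • m) = c • a m)
    (haH : ∀ h ∈ H, ∀ m : M,
      a (MonoidAlgebra.of O G h • m) = MonoidAlgebra.of O G h • a m)
    -- ... whose relative trace is the identity of `M`
    (htr : ∀ m : M,
      ∑ t ∈ T, MonoidAlgebra.of O G t • a (MonoidAlgebra.of O G t⁻¹ • m) = m) :
    ∀ n : ℕ,
      (∃ (P : Type) (_ : AddCommGroup P) (_ : Module (MonoidAlgebra O ↥H) P)
        (_ : Module O P) (_ : IsScalarTower O (MonoidAlgebra O ↥H) P),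
        Module.Projective (MonoidAlgebra O ↥H) P ∧
        ∃ (u : M → P) (v : P → M),
          (∀ m m' : M, u (m + m') = u m + u m') ∧
          (∀ (c : O) (m : M), u (c • m) = c • u m) ∧
          (∀ (s : ↥H) (m : M),
            u (MonoidAlgebra.of O G (s : G) • m) = MonoidAlgebra.of O ↥H s • u m) ∧
          (∀ x y : P, v (x + y) = v x + v y) ∧
          (∀ (c : O) (x : P), v (c • x) = c • v x) ∧
          (∀ (s : ↥H) (x : P),
            v (MonoidAlgebra.of O ↥H s • x) = MonoidAlgebra.of O G (s : G) • v x) ∧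
          (∀ m : M, v (u m) = π ^ n • m))
      ↔
      (∃ (Q : Type) (_ : AddCommGroup Q) (_ : Module (MonoidAlgebra O G) Q),
        Module.Projective (MonoidAlgebra O G) Q ∧
        ∃ (u : M →ₗ[MonoidAlgebra O G] Q) (v : Q →ₗ[MonoidAlgebra O G] M),
          ∀ m : M, v (u m) = π ^ n • m) := by
  let a' : M →ₗ[O] M := ⟨⟨a, haAdd⟩, haO⟩
  have hTH := isComplement_of_existsUnique_mem_inv_mul_mem hT
  intro n
  constructor
  · rintro ⟨P, _, _, _, _, hP, u, v, huAdd, huO, huH, hvAdd, hvO, hvH, huv⟩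
    have hres : FactorsThroughProjectiveRes O H (π ^ n • a') :=
      ⟨P, _, _, _, inferInstance, hP, ⟨⟨u, huAdd⟩, huO⟩ ∘ₗ a', ⟨⟨v, hvAdd⟩, hvO⟩,
        fun s m => (congrArg u (haH s s.2 m)).trans (huH s (a m)), hvH, fun m => huv (a m)⟩
    have htrace : ⇑(relTrace T (π ^ n • a')) = (π ^ n • ·) := by
      ext m
      rw [relTrace_smul, LinearMap.smul_apply, relTrace_apply]
      exact congrArg _ (htr m)
    have hfac := factorsThroughProjective_relTrace hTH hres
    rwa [htrace] at hfac
  · intro hfac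
    obtain ⟨P, _, _, _, _, hP, u, v, hu, hv, huv⟩ :=
      FactorsThroughProjective.factorsThroughProjectiveRes (H := H) hfac
    exact ⟨P, _, _, _, inferInstance, hP, u, v, u.map_add, u.map_smul, hu, v.map_add, v.map_smul,
      hv, huv⟩

/-- Let `O` be a complete discrete valuation ring with uniformizer
`π`, `G` a finite group, `H ≤ G`, and `M` an `OG`-lattice which is projective
relative to `H`: the identity of `M` is the relative trace `Tr_{H,G}(a)` of some
`OH`-endomorphism `a` (the sum being over a transversal `T` of the left cosets
of `H` in `G`).  Then for every `n`, `π^n • Id_M` factors through a projective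
`OH`-module as an `OH`-map if and only if it factors through a projective
`OG`-module as an `OG`-map.  (In particular `exp(M) = exp(M↓_H)`.) -/
theorem relative_projectivity_exponent
    (O : Type) [CommRing O] [IsDomain O] [IsDiscreteValuationRing O]
    (π : O) (hπ : Irreducible π)
    [IsAdicComplete (Ideal.span {π}) O]
    (G : Type) [Group G] [Fintype G] (H : Subgroup G)
    (M : Type) [AddCommGroup M] [Module (MonoidAlgebra O G) M]
    [Module O M] [IsScalarTower O (MonoidAlgebra O G) M]
    (hMfg : Module.Finite (MonoidAlgebra O G) M) (hMfree : Module.Free O M)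
    -- a transversal of the left cosets of `H` in `G`
    (T : Finset G) (hT : ∀ g : G, ∃! t : G, t ∈ T ∧ g⁻¹ * t ∈ H)
    -- an `OH`-linear endomorphism `a` of `M` ...
    (a : M → M)
    (haAdd : ∀ m m' : M, a (m + m') = a m + a m')
    (haO : ∀ (c : O) (m : M), a (c • m) = c • a m)
    (haH : ∀ h ∈ H, ∀ m : M,
      a (MonoidAlgebra.of O G h • m) = MonoidAlgebra.of O G h • a m)
    -- ... whose relative trace is the identity of `M`
    (htr : ∀ m : M,
      ∑ t ∈ T, MonoidAlgebra.of O G t • a (MonoidAlgebra.of O G t⁻¹ • m) = m) :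
    ∀ n : ℕ,
      (∃ (P : Type) (_ : AddCommGroup P) (_ : Module (MonoidAlgebra O ↥H) P)
        (_ : Module O P) (_ : IsScalarTower O (MonoidAlgebra O ↥H) P),
        Module.Projective (MonoidAlgebra O ↥H) P ∧
        ∃ (u : M → P) (v : P → M),
          (∀ m m' : M, u (m + m') = u m + u m') ∧
          (∀ (c : O) (m : M), u (c • m) = c • u m) ∧
          (∀ (s : ↥H) (m : M),
            u (MonoidAlgebra.of O G (s : G) • m) = MonoidAlgebra.of O ↥H s • u m) ∧
          (∀ x y : P, v (x + y) = v x + v y) ∧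
          (∀ (c : O) (x : P), v (c • x) = c • v x) ∧
          (∀ (s : ↥H) (x : P),
            v (MonoidAlgebra.of O ↥H s • x) = MonoidAlgebra.of O G (s : G) • v x) ∧
          (∀ m : M, v (u m) = π ^ n • m))
      ↔
      (∃ (Q : Type) (_ : AddCommGroup Q) (_ : Module (MonoidAlgebra O G) Q),
        Module.Projective (MonoidAlgebra O G) Q ∧
        ∃ (u : M →ₗ[MonoidAlgebra O G] Q) (v : Q →ₗ[MonoidAlgebra O G] M),
          ∀ m : M, v (u m) = π ^ n • m) :=
  relative_projectivity_exponent_general O π G H M T hT a haAdd haO haH htr
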